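/- arXiv:2501.03234 — 9 statements merged into one kernel-verified Lean document; each statement's English description precedes it below -/
import Mathlib

section
/- For every odd positive integer k, T(k) = 2k - 1 - 2·∑_{d|k} d·φ(k/d), where φ is Euler's totient function. -/
/-- `S(h,k) := ∑_{j=1}^{k-1} (-1)^{j+1+⌊hj/k⌋}` (here `h*j/k` is natural-number
division, which agrees with the floor of the rational `hj/k`). -/
def Tpair (h k : ℕ) : ℤ := ∑ j ∈ Finset.Icc 1 (2 * k - 1), (-1 : ℤ) ^ (j + 1 + h * j / k)

/-- `T(k) := ∑_{h=1}^{2k-1} T(h,k)`. -/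
def Tsum (k : ℕ) : ℤ := ∑ h ∈ Finset.Icc 1 (2 * k - 1), Tpair h k

/-!
Write `ε(j) = (-1)^(j+1+⌊hj/k⌋)`. Shifting `j` by `k` multiplies `ε` by `(-1)^(k+h)`, so
`T(h,k) = ε(k) + (1 + (-1)^(k+h)) ∑_{0<j<k} ε(j)`; for `k` odd and `h` even this is `1`.
For `h` odd, `⌊h(k-j)/k⌋ + ⌊hj/k⌋ = h - [k ∤ hj]` shows that the reflection `j ↦ k - j`
flips the sign of `ε(j)` unless `k ∣ hj`. Only the `gcd(k,h) - 1` multiples of `k / gcd(k,h)`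
in `(0,k)` survive, each contributing `-1`, whence `T(h,k) = 1 - 2 gcd(k,h)`.
Finally the odd `h < 2k` run over all residues mod `k`, and grouping `r < k` by `gcd(k,r)`
gives `∑_{r<k} gcd(k,r) = ∑_{d ∣ k} d φ(k/d)`.
-/

open Finset

def Tsign (h k j : ℕ) : ℤ := (-1) ^ (j + 1 + h * j / k)

theorem Nat.sub_div_add_div_add_ite {a m k : ℕ} (hk : 0 < k) (ha : a ≤ m * k) :
    (m * k - a) / k + a / k + (if k ∣ a then 0 else 1) = m := by
  obtain ⟨q, r, hr, rfl⟩ : ∃ q r, r < k ∧ a = r + k * q :=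
    ⟨a / k, a % k, Nat.mod_lt _ hk, (Nat.mod_add_div a k).symm⟩
  simp only [Nat.add_mul_div_left _ _ hk, Nat.div_eq_of_lt hr,
    Nat.dvd_add_left (Nat.dvd_mul_right k q), Nat.dvd_iff_mod_eq_zero, Nat.mod_eq_of_lt hr]
  rcases Nat.eq_zero_or_pos r with rfl | hr0
  · have hqm : q ≤ m := Nat.le_of_mul_le_mul_right (by linarith) hk
    rw [zero_add, mul_comm k q, ← Nat.sub_mul, Nat.mul_div_cancel _ hk]
    simp; omega
  · have hqm : q < m := Nat.lt_of_mul_lt_mul_right (a := k) (by linarith)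
    obtain ⟨t, rfl⟩ : ∃ t, m = q + 1 + t := ⟨m - q - 1, by omega⟩
    have : (q + 1 + t) * k - (r + k * q) = (k - r) + k * t := by
      zify [hr.le, ha]; ring
    rw [this, Nat.add_mul_div_left _ _ hk, Nat.div_eq_of_lt (by omega)]
    simp [hr0.ne']; omega

theorem Nat.dvd_mul_left_iff_div_gcd_dvd {k h j : ℕ} (hk : 0 < k) :
    k ∣ h * j ↔ k / k.gcd h ∣ j := by
  constructor
  · intro hd
    exact (Nat.modEq_zero_iff_dvd.1 (Nat.ModEq.cancel_left_div_gcd hk (c := h) (b := 0)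
      (by rw [mul_zero]; exact Nat.modEq_zero_iff_dvd.2 hd)))
  · intro hd
    calc k = k.gcd h * (k / k.gcd h) := (Nat.mul_div_cancel' (Nat.gcd_dvd_left k h)).symm
      _ ∣ h * j := Nat.mul_dvd_mul (Nat.gcd_dvd_right k h) hd

theorem card_filter_dvd_mul_Ico (h : ℕ) {k : ℕ} (hk : 0 < k) :
    #{j ∈ Ico 1 k | k ∣ h * j} = k.gcd h - 1 := by
  have hIco : Ico 1 k = (Ioc 0 k).erase k := by ext; simp; omega
  simp_rw [Nat.dvd_mul_left_iff_div_gcd_dvd hk]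
  rw [hIco, filter_erase, card_erase_of_mem, Nat.Ioc_filter_dvd_card_eq_div,
    Nat.div_div_self (Nat.gcd_dvd_left k h) hk.ne']
  simp [hk, Nat.div_dvd_of_dvd (Nat.gcd_dvd_left k h)]

theorem Tsign_add_self (h : ℕ) {k : ℕ} (hk : 0 < k) (j : ℕ) :
    Tsign h k (j + k) = (-1) ^ (k + h) * Tsign h k j := by
  rw [Tsign, Tsign, ← pow_add, mul_add, Nat.add_mul_div_right _ _ hk]
  ring_nf

theorem Tsign_sub_mul_Tsign (h : ℕ) {k j : ℕ} (hk : 0 < k) (hj : j ≤ k) :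
    Tsign h k (k - j) * Tsign h k j * (if k ∣ h * j then 1 else -1) = (-1) ^ (k + h) := by
  have key := Nat.sub_div_add_div_add_ite (a := h * j) (m := h) hk (Nat.mul_le_mul_left h hj)
  have hexp : (k - j + 1 + h * (k - j) / k) + (j + 1 + h * j / k) + (if k ∣ h * j then 0 else 1)
      = (k + h) + 2 := by
    rw [Nat.mul_sub, mul_comm h k] at *
    omega
  have hite : (if k ∣ h * j then 1 else -1 : ℤ) = (-1) ^ (if k ∣ h * j then 0 else 1) := by
    split_ifs <;> simp
  rw [Tsign, Tsign, hite, ← pow_add, ← pow_add, hexp, pow_add]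
  simp

theorem Tsign_of_dvd {h k j : ℕ} (hh : Odd h) (hk : Odd k) (hd : k ∣ h * j) :
    Tsign h k j = -1 := by
  obtain ⟨q, hq⟩ := hd
  have hq' : h * j / k = q := by rw [hq, Nat.mul_div_cancel_left _ hk.pos]
  have hpar : Even q ↔ Even j := by
    have := congrArg Even hq
    simp only [Nat.even_mul, Nat.not_even_iff_odd.2 hh, Nat.not_even_iff_odd.2 hk, false_or] at this
    exact (Iff.of_eq this).symm
  rw [Tsign, hq']
  apply Odd.neg_one_pow
  rw [Nat.odd_add, Nat.odd_add_one, ← Nat.not_even_iff_odd, hpar]; tauto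

theorem Tpair_eq_Tsign_add (h : ℕ) {k : ℕ} (hk : 0 < k) :
    Tpair h k = Tsign h k k + (1 + (-1) ^ (k + h)) * ∑ j ∈ Ico 1 k, Tsign h k j := by
  have hIcc : Icc 1 (2 * k - 1) = Ico 1 (k + k) := by ext; simp; omega
  have hshift : ∑ j ∈ Ico k (k + k), Tsign h k j = ∑ j ∈ Ico 0 k, Tsign h k (j + k) := by
    rw [sum_Ico_add', zero_add]
  change ∑ j ∈ Icc 1 (2 * k - 1), Tsign h k j = _
  rw [hIcc, ← sum_Ico_consecutive _ (by omega : 1 ≤ k) (by omega : k ≤ k + k), hshift,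
    sum_eq_sum_Ico_succ_bot hk]
  simp only [Tsign_add_self h hk, zero_add, ← mul_sum]
  ring

theorem sum_Ico_Tsign_of_odd {h k : ℕ} (hh : Odd h) (hk : Odd k) :
    ∑ j ∈ Ico 1 k, Tsign h k j = 1 - k.gcd h := by
  have hsign : (-1 : ℤ) ^ (k + h) = 1 := (hk.add_odd hh).neg_one_pow
  have hpair : ∀ j ∈ Ico 1 k, Tsign h k (k - j) + Tsign h k j
      = 2 * if k ∣ h * j then Tsign h k j else 0 := by
    intro j hj
    have := Tsign_sub_mul_Tsign h hk.pos (mem_Ico.1 hj).2.le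
    have hsq : Tsign h k j * Tsign h k j = 1 := by
      rw [Tsign, ← pow_add, ← two_mul, pow_mul]; simp
    rw [hsign] at this
    split_ifs at this ⊢
    · linear_combination Tsign h k j * this - Tsign h k (k - j) * hsq
    · linear_combination -Tsign h k j * this - Tsign h k (k - j) * hsq
  have hreflect : ∑ j ∈ Ico 1 k, Tsign h k (k - j) = ∑ j ∈ Ico 1 k, Tsign h k j := by
    rw [sum_Ico_reflect _ _ (by omega)]; congr 1; ext; simp
  have htwice : 2 * ∑ j ∈ Ico 1 k, Tsign h k j = 2 * (1 - k.gcd h) := by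
    rw [two_mul]
    nth_rw 1 [← hreflect]
    rw [← sum_add_distrib, sum_congr rfl hpair, ← mul_sum, ← sum_filter,
      sum_congr rfl fun j hj => Tsign_of_dvd hh hk (mem_filter.1 hj).2, sum_const,
      card_filter_dvd_mul_Ico h hk.pos]
    have : 1 ≤ k.gcd h := Nat.gcd_pos_of_pos_left h hk.pos
    rw [nsmul_eq_mul, Nat.cast_sub this]; push_cast; ring
  linarith

theorem Tpair_of_even {h k : ℕ} (hh : Even h) (hk : Odd k) : Tpair h k = 1 := by
  rw [Tpair_eq_Tsign_add h hk.pos, Tsign, Nat.mul_div_cancel _ hk.pos,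
    (hk.add_even hh).neg_one_pow, (hk.add_one.add hh).neg_one_pow]
  ring

theorem Tpair_of_odd {h k : ℕ} (hh : Odd h) (hk : Odd k) : Tpair h k = 1 - 2 * k.gcd h := by
  rw [Tpair_eq_Tsign_add h hk.pos, Tsign, Nat.mul_div_cancel _ hk.pos, sum_Ico_Tsign_of_odd hh hk,
    (hk.add_odd hh).neg_one_pow, (hk.add_one.add_odd hh).neg_one_pow]
  ring

theorem sum_filter_odd_Icc_mod {M : Type*} [AddCommMonoid M] {k : ℕ} (hk : Odd k) (f : ℕ → M) :
    ∑ h ∈ Icc 1 (2 * k - 1) with Odd h, f (h % k) = ∑ r ∈ range k, f r := by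
  have hk2 : k % 2 = 1 := Nat.odd_iff.mp hk
  refine sum_nbij' (fun h => h % k) (fun r => if r % 2 = 1 then r else r + k) ?_ ?_ ?_ ?_
    fun _ _ => rfl
  all_goals simp only [mem_filter, mem_Icc, mem_range, Nat.odd_iff]
  · exact fun h _ => Nat.mod_lt _ hk.pos
  · intro r hr
    split_ifs <;> omega
  · intro h hh
    rcases Nat.lt_or_ge h k with hlt | hge
    · simp [Nat.mod_eq_of_lt hlt, hh.2]
    · have hmod : h % k = h - k := by rw [Nat.mod_eq_sub_mod hge, Nat.mod_eq_of_lt (by omega)]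
      rw [hmod, if_neg (by omega)]
      omega
  · intro r hr
    split_ifs <;> simp [Nat.mod_eq_of_lt hr]

theorem Nat.sum_range_gcd_eq_sum_divisors (n : ℕ) :
    ∑ r ∈ range n, n.gcd r = ∑ d ∈ n.divisors, d * Nat.totient (n / d) := by
  rcases n.eq_zero_or_pos with rfl | hn
  · simp
  rw [← sum_fiberwise_of_maps_to (t := n.divisors) (g := n.gcd)
    fun r _ => Nat.mem_divisors.2 ⟨Nat.gcd_dvd_left n r, hn.ne'⟩]
  refine sum_congr rfl fun d hd => ?_
  rw [sum_congr rfl fun r hr => (mem_filter.1 hr).2, sum_const, smul_eq_mul,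
    ← Nat.totient_div_of_dvd (Nat.dvd_of_mem_divisors hd), mul_comm]

theorem stmt_0_general (k : ℕ) (hodd : Odd k) :
    Tsum k = 2 * (k : ℤ) - 1 -
      2 * ∑ d ∈ k.divisors, (d : ℤ) * (Nat.totient (k / d) : ℤ) := by
  have hTpair (h : ℕ) : Tpair h k = 1 - 2 * if Odd h then (k.gcd h : ℤ) else 0 := by
    rcases Nat.even_or_odd h with hh | hh
    · rw [Tpair_of_even hh hodd, if_neg (Nat.not_odd_iff_even.2 hh)]; ring
    · rw [Tpair_of_odd hh hodd, if_pos hh]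
  have hgcd : ∑ h ∈ Icc 1 (2 * k - 1) with Odd h, (k.gcd h : ℤ)
      = ∑ d ∈ k.divisors, (d : ℤ) * (Nat.totient (k / d) : ℤ) := by
    have hmod (h : ℕ) : k.gcd (h % k) = k.gcd h := by rw [Nat.gcd_comm, ← Nat.gcd_rec]
    rw [← sum_congr rfl fun h _ => congrArg (fun n : ℕ => (n : ℤ)) (hmod h),
      sum_filter_odd_Icc_mod hodd (fun r => (k.gcd r : ℤ))]
    exact_mod_cast Nat.sum_range_gcd_eq_sum_divisors k
  rw [Tsum, sum_congr rfl fun h _ => hTpair h, sum_sub_distrib, ← mul_sum, ← sum_filter, hgcd,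
    sum_const, Nat.card_Icc, nsmul_one, Nat.add_sub_cancel, Nat.cast_sub (by linarith [hodd.pos])]
  push_cast
  ring

theorem stmt_0 (k : ℕ) (hk : 0 < k) (hodd : Odd k) :
    Tsum k = 2 * (k : ℤ) - 1 -
      2 * ∑ d ∈ k.divisors, (d : ℤ) * (Nat.totient (k / d) : ℤ) :=
  stmt_0_general k hodd
end

section
/- If h and k are odd positive integers, then T(h,k) = 1 - 2·gcd(h,k). -/
open Finset

theorem neg_one_pow_add_neg_one_pow_of_odd_add {R : Type*} [Ring R] {a b : ℕ} (hab : Odd (a + b)) :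
    (-1 : R) ^ a + (-1) ^ b = 0 := by
  have hb : Even b ↔ Even (a + 1) := by
    simp only [Nat.even_iff]
    rw [Nat.odd_iff] at hab
    omega
  rw [neg_one_pow_congr hb, pow_succ, mul_neg_one, add_neg_cancel]

theorem Nat.div_add_div_add_one_of_add_eq_mul {n m k a : ℕ} (hsum : n + m = k * a) (hn : ¬ k ∣ n) :
    n / k + m / k + 1 = a := by
  have hk : 0 < k := Nat.pos_of_ne_zero (by rintro rfl; simp_all)
  have hmod : k ≤ n % k + m % k := by
    by_contra! hlt
    have : (n + m) % k = n % k + m % k := by rw [Nat.add_mod, Nat.mod_eq_of_lt hlt]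
    rw [hsum, Nat.mul_mod_right] at this
    exact hn (Nat.dvd_of_mod_eq_zero (by omega))
  have := Nat.add_div_eq_of_le_mod_add_mod hmod hk
  rw [hsum, Nat.mul_div_cancel_left _ hk] at this
  omega

theorem Nat.mul_add_mul_two_mul_sub {h k j : ℕ} (hj : j ≤ 2 * k) :
    h * j + h * (2 * k - j) = k * (2 * h) := by
  rw [← Nat.mul_add, Nat.add_sub_cancel' hj]
  ring

theorem Nat.dvd_mul_iff_div_gcd_dvd {h k j : ℕ} (hk : 0 < k) : k ∣ h * j ↔ k / h.gcd k ∣ j := by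
  rw [Nat.div_dvd_iff_dvd_mul (Nat.gcd_dvd_right h k) (Nat.gcd_pos_of_pos_right h hk),
    Nat.gcd_comm, Nat.dvd_gcd_mul_iff_dvd_mul]

theorem Nat.card_filter_Icc_dvd_mul (h : ℕ) {k : ℕ} (hk : 0 < k) :
    #{j ∈ Icc 1 (2 * k - 1) | k ∣ h * j} = 2 * h.gcd k - 1 := by
  have hd : 0 < h.gcd k := Nat.gcd_pos_of_pos_right h hk
  have hm : 0 < k / h.gcd k := Nat.div_pos (Nat.le_of_dvd hk (Nat.gcd_dvd_right h k)) hd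
  have hk' : 2 * k - 1 = k / h.gcd k * (2 * h.gcd k) - (0 + 1) := by
    rw [mul_left_comm, Nat.div_mul_cancel (Nat.gcd_dvd_right h k)]
  calc #{j ∈ Icc 1 (2 * k - 1) | k ∣ h * j}
      = #{j ∈ Ioc 0 (2 * k - 1) | k / h.gcd k ∣ j} :=
        congrArg card (filter_congr fun j _ ↦ Nat.dvd_mul_iff_div_gcd_dvd hk)
    _ = 2 * h.gcd k - 1 := by
      rw [Nat.Ioc_filter_dvd_card_eq_div, hk', Nat.mul_sub_div 0 _ _ (by positivity),
        Nat.zero_div]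

namespace Tpair

theorem term_eq_neg_one_of_dvd {h k j : ℕ} (hh : Odd h) (hk : Odd k) (hdvd : k ∣ h * j) :
    (-1 : ℤ) ^ (j + 1 + h * j / k) = -1 := by
  have hpar : Even j ↔ Even (h * j / k) := by
    simpa [Nat.even_mul, Nat.not_even_iff_odd.mpr hh, Nat.not_even_iff_odd.mpr hk] using
      congrArg Even (Nat.mul_div_cancel' hdvd).symm
  apply Odd.neg_one_pow
  rw [add_right_comm, Nat.odd_add_one, Nat.not_odd_iff_even, Nat.even_add]
  exact hpar

theorem sum_filter_dvd {h k : ℕ} (hh : Odd h) (hk : Odd k) :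
    ∑ j ∈ Icc 1 (2 * k - 1) with k ∣ h * j, (-1 : ℤ) ^ (j + 1 + h * j / k) = 1 - 2 * h.gcd k := by
  rw [sum_congr rfl fun j hj ↦ term_eq_neg_one_of_dvd hh hk (mem_filter.mp hj).2, sum_const,
    Nat.card_filter_Icc_dvd_mul h hk.pos, nsmul_eq_mul, mul_neg_one,
    Nat.cast_sub (by linarith [Nat.gcd_pos_of_pos_right h hk.pos])]
  push_cast
  ring

theorem sum_filter_not_dvd (h k : ℕ) :
    ∑ j ∈ Icc 1 (2 * k - 1) with ¬ k ∣ h * j, (-1 : ℤ) ^ (j + 1 + h * j / k) = 0 := by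
  refine sum_involution (fun j _ ↦ 2 * k - j) ?_ ?_ ?_ ?_ <;>
    simp only [mem_filter, mem_Icc, and_imp]
  · intro j hj₁ hj₂ hnd
    apply neg_one_pow_add_neg_one_pow_of_odd_add
    have hfloor := Nat.div_add_div_add_one_of_add_eq_mul (Nat.mul_add_mul_two_mul_sub (by omega)) hnd
    exact ⟨k + h, by omega⟩
  · intro j hj₁ hj₂ hnd _ hrefl
    exact hnd (by rw [show j = k by omega]; exact dvd_mul_left k h)
  · intro j hj₁ hj₂ hnd
    have hsum := Nat.mul_add_mul_two_mul_sub (h := h) (show j ≤ 2 * k by omega)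
    refine ⟨⟨by omega, by omega⟩, fun hdvd ↦ hnd ((Nat.dvd_add_left hdvd).mp ?_)⟩
    exact hsum ▸ dvd_mul_right k _
  · intro j hj₁ hj₂ _
    omega

end Tpair

theorem stmt_2_general (h k : ℕ) (hho : Odd h) (hko : Odd k) :
    Tpair h k = 1 - 2 * (Nat.gcd h k : ℤ) := by
  rw [Tpair, ← sum_filter_add_sum_filter_not _ (fun j ↦ k ∣ h * j),
    Tpair.sum_filter_dvd hho hko, Tpair.sum_filter_not_dvd h k, add_zero]

theorem stmt_2 (h k : ℕ) (hh : 0 < h) (hk : 0 < k) (hho : Odd h) (hko : Odd k) :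
    Tpair h k = 1 - 2 * (Nat.gcd h k : ℤ) :=
  stmt_2_general h k hho hko
end

section
/- If k is an odd prime, then S(k) = -(k-1)² + 4·∑_{ℓ=1}^{(k-1)/2} ∑_{h=1}^{(k-1)/2} ({2hℓ/k} + {h(2ℓ-1)/k - 1/2}), where {x} denotes the fractional part of x. -/
/-- `S(h,k) := ∑_{j=1}^{k-1} (-1)^{j+1+⌊hj/k⌋}` (here `h*j/k` is natural-number
division, which agrees with the floor of the rational `hj/k`). -/
def Spair (h k : ℕ) : ℤ := ∑ j ∈ Finset.Icc 1 (k - 1), (-1 : ℤ) ^ (j + 1 + h * j / k)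

/-- `S(k) := ∑_{h=1}^{k-1} S(h,k)`. -/
def Ssum (k : ℕ) : ℤ := ∑ h ∈ Finset.Icc 1 (k - 1), Spair h k

/-!
Write `k = 2m + 1`. Since `⌊(k - h)j/k⌋ = j - 1 - ⌊hj/k⌋` when `k ∤ hj`, the terms of `S(h,k)` and
`S(k-h,k)` cancel for even `j` and agree for odd `j = 2ℓ - 1`, so `S(k)` is twice a double sum of
signs `(-1)^⌊h(2ℓ-1)/k⌋`. The same reflection shows `h ↦ (-1)^⌊h(2ℓ-1)/k⌋` is invariant under
`h ↦ k - h`, so these signs may be taken at the even points `2h`, `1 ≤ h ≤ m`.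

On the other side, `{x - 1/2} = {x} + (-1)^⌊2x⌋/2` produces exactly these signs, and the
remaining fractional parts sum to `m` for every `h`: reflecting `ℓ ↦ m + 1 - ℓ` turns
`h(2ℓ-1)/k` into `h - 2hℓ/k`, whose fractional part is `1 - {2hℓ/k}`.
-/

open Finset

section Reindexing

variable {M : Type*} [AddCommMonoid M]

theorem Finset.sum_Icc_one_reflect (f : ℕ → M) (n : ℕ) :
    ∑ i ∈ Icc 1 n, f (n + 1 - i) = ∑ i ∈ Icc 1 n, f i :=
  sum_nbij' (fun i ↦ n + 1 - i) (fun i ↦ n + 1 - i)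
    (fun i hi ↦ by simp only [mem_Icc] at hi ⊢; omega)
    (fun i hi ↦ by simp only [mem_Icc] at hi ⊢; omega)
    (fun i hi ↦ by simp only [mem_Icc] at hi; omega)
    (fun i hi ↦ by simp only [mem_Icc] at hi; omega)
    (fun _ _ ↦ rfl)

theorem Finset.sum_Icc_one_two_mul (f : ℕ → M) (m : ℕ) :
    ∑ j ∈ Icc 1 (2 * m), f j = ∑ l ∈ Icc 1 m, (f (2 * l - 1) + f (2 * l)) := by
  induction m with
  | zero => simp
  | succ m ih =>
    rw [show 2 * (m + 1) = 2 * m + 1 + 1 by ring, sum_Icc_succ_top (by omega),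
      sum_Icc_succ_top (by omega), ih, sum_Icc_succ_top (by omega), add_assoc]
    congr 3

theorem Finset.sum_Icc_one_two_mul_of_symm (g : ℕ → M) (m : ℕ)
    (hg : ∀ a ∈ Icc 1 (2 * m), g (2 * m + 1 - a) = g a) :
    ∑ a ∈ Icc 1 (2 * m), g a = 2 • ∑ h ∈ Icc 1 m, g (2 * h) := by
  have hodd : ∑ l ∈ Icc 1 m, g (2 * l - 1) = ∑ l ∈ Icc 1 m, g (2 * (m + 1 - l)) := by
    refine sum_congr rfl fun l hl ↦ ?_
    rw [mem_Icc] at hl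
    rw [← hg _ (by rw [mem_Icc]; omega)]
    congr 1; omega
  rw [sum_Icc_one_two_mul, sum_add_distrib, hodd, sum_Icc_one_reflect (fun l ↦ g (2 * l)),
    two_nsmul]

end Reindexing

theorem Nat.sub_mul_div_add_mul_div {k a n : ℕ} (ha : a ≤ k) (hdvd : ¬ k ∣ a * n) :
    (k - a) * n / k + a * n / k + 1 = n := by
  have hk : 0 < k := Nat.pos_of_ne_zero (by rintro rfl; simp_all)
  have hsum : (k - a) * n + a * n = k * n := by rw [← add_mul, Nat.sub_add_cancel ha]
  have hmod : k ≤ (k - a) * n % k + a * n % k :=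
    Nat.le_mod_add_mod_of_dvd_add_of_not_dvd (hsum ▸ dvd_mul_right k n)
      (fun h ↦ hdvd ((Nat.dvd_add_right h).mp (hsum ▸ dvd_mul_right k n)))
  rw [← Nat.add_div_eq_of_le_mod_add_mod hmod hk, hsum, Nat.mul_div_cancel_left n hk]

theorem neg_one_pow_sub_mul_div {R : Type*} [Ring R] {k a n : ℕ} (ha : a ≤ k)
    (hdvd : ¬ k ∣ a * n) :
    (-1 : R) ^ ((k - a) * n / k) = (-1) ^ (n + 1) * (-1) ^ (a * n / k) := by
  obtain ⟨q, r, hq, hr, hn⟩ : ∃ q r, (k - a) * n / k = q ∧ a * n / k = r ∧ n = q + r + 1 :=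
    ⟨_, _, rfl, rfl, (Nat.sub_mul_div_add_mul_div ha hdvd).symm⟩
  rw [hq, hr, ← pow_add, hn, show q + r + 1 + 1 + r = q + 2 * (r + 1) by ring, pow_add, pow_mul]
  simp

theorem Nat.Prime.not_dvd_mul_of_lt {p a b : ℕ} (hp : p.Prime) (ha₀ : 0 < a) (ha : a < p)
    (hb₀ : 0 < b) (hb : b < p) : ¬ p ∣ a * b := by
  rw [hp.dvd_mul]
  rintro (h | h)
  · exact absurd (Nat.le_of_dvd ha₀ h) (by omega)
  · exact absurd (Nat.le_of_dvd hb₀ h) (by omega)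

theorem Int.fract_sub_half {α : Type*} [Field α] [LinearOrder α] [IsStrictOrderedRing α]
    [FloorRing α] (x : α) :
    Int.fract (x - 1 / 2) = Int.fract x + (-1) ^ ⌊2 * x⌋ / 2 := by
  have hx : x = ⌊x⌋ + Int.fract x := (Int.floor_add_fract x).symm
  have h0 := Int.fract_nonneg x
  have h1 := Int.fract_lt_one x
  rcases lt_or_ge (Int.fract x) (1 / 2) with hlt | hge
  · have hfl : ⌊2 * x⌋ = 2 * ⌊x⌋ := by
      rw [Int.floor_eq_iff]; push_cast; constructor <;> linarith
    rw [hfl, Even.neg_one_zpow ⟨⌊x⌋, two_mul _⟩, Int.fract_eq_iff]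
    refine ⟨by linarith, by linarith, ⌊x⌋ - 1, ?_⟩
    push_cast; linarith
  · have hfl : ⌊2 * x⌋ = 2 * ⌊x⌋ + 1 := by
      rw [Int.floor_eq_iff]; push_cast; constructor <;> linarith
    rw [hfl, Odd.neg_one_zpow ⟨⌊x⌋, rfl⟩, Int.fract_eq_iff]
    refine ⟨by linarith, by linarith, ⌊x⌋, ?_⟩
    linarith

theorem fract_mul_two_mul_sub_one_div_sub_half (h l k : ℕ) (hl : 0 < l) :
    Int.fract ((h : ℝ) * (2 * (l : ℝ) - 1) / k - 1 / 2)
      = Int.fract ((h : ℝ) * (2 * (l : ℝ) - 1) / k)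
        + ((-1 : ℤ) ^ (2 * h * (2 * l - 1) / k) : ℝ) / 2 := by
  have hfloor : ⌊2 * ((h : ℝ) * (2 * (l : ℝ) - 1) / k)⌋ = ((2 * h * (2 * l - 1) / k : ℕ) : ℤ) := by
    rw [show 2 * ((h : ℝ) * (2 * (l : ℝ) - 1) / k) = ((2 * h * (2 * l - 1) : ℕ) : ℝ) / (k : ℕ) by
      rw [Nat.cast_mul, Nat.cast_sub (by omega)]; push_cast; ring,
      Int.floor_div_natCast, Int.floor_natCast]
    norm_cast
  rw [Int.fract_sub_half, hfloor, zpow_natCast]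
  push_cast
  rfl

section OddPrime

variable {k m : ℕ}

theorem Spair_add_Spair_sub (hk : k.Prime) (hkm : k = 2 * m + 1) {h : ℕ} (h₀ : 0 < h)
    (hh : h < k) :
    Spair h k + Spair (k - h) k = 2 * ∑ l ∈ Icc 1 m, (-1 : ℤ) ^ (h * (2 * l - 1) / k) := by
  have hterm : ∀ j ∈ Icc 1 (2 * m),
      (-1 : ℤ) ^ (j + 1 + h * j / k) + (-1) ^ (j + 1 + (k - h) * j / k)
        = ((-1) ^ (j + 1) + 1) * (-1) ^ (h * j / k) := by
    intro j hj
    rw [mem_Icc] at hj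
    have hsq : (-1 : ℤ) ^ (j + 1) * (-1) ^ (j + 1) = 1 := by
      rw [← pow_add, ← two_mul, pow_mul]; simp
    rw [pow_add, pow_add _ _ ((k - h) * j / k),
      neg_one_pow_sub_mul_div hh.le (hk.not_dvd_mul_of_lt h₀ hh (by omega) (by omega))]
    linear_combination (-1 : ℤ) ^ (h * j / k) * hsq
  rw [Spair, Spair, ← sum_add_distrib, show k - 1 = 2 * m by omega, sum_congr rfl hterm,
    sum_Icc_one_two_mul, mul_sum]
  refine sum_congr rfl fun l hl ↦ ?_
  rw [mem_Icc] at hl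
  rw [show 2 * l - 1 + 1 = 2 * l by omega, pow_succ, pow_mul]
  norm_num

theorem Ssum_eq_sum_sum (hk : k.Prime) (hkm : k = 2 * m + 1) :
    Ssum k = ∑ h ∈ Icc 1 (2 * m), ∑ l ∈ Icc 1 m, (-1 : ℤ) ^ (h * (2 * l - 1) / k) := by
  refine mul_left_cancel₀ (two_ne_zero (α := ℤ)) ?_
  calc 2 * Ssum k = ∑ h ∈ Icc 1 (2 * m), (Spair h k + Spair (k - h) k) := by
        rw [Ssum, two_mul, sum_add_distrib, show k - 1 = 2 * m by omega, hkm,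
          sum_Icc_one_reflect (fun h ↦ Spair h (2 * m + 1))]
    _ = 2 * ∑ h ∈ Icc 1 (2 * m), ∑ l ∈ Icc 1 m, (-1 : ℤ) ^ (h * (2 * l - 1) / k) := by
        rw [mul_sum]
        exact sum_congr rfl fun h hh ↦
          Spair_add_Spair_sub hk hkm (mem_Icc.mp hh).1 (by rw [mem_Icc] at hh; omega)

theorem Ssum_eq_two_mul_sum (hk : k.Prime) (hkm : k = 2 * m + 1) :
    Ssum k = 2 * ∑ l ∈ Icc 1 m, ∑ h ∈ Icc 1 m, (-1 : ℤ) ^ (2 * h * (2 * l - 1) / k) := by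
  rw [Ssum_eq_sum_sum hk hkm, sum_comm, mul_sum]
  refine sum_congr rfl fun l hl ↦ ?_
  rw [mem_Icc] at hl
  rw [sum_Icc_one_two_mul_of_symm (fun h ↦ (-1 : ℤ) ^ (h * (2 * l - 1) / k)), nsmul_eq_mul,
    Nat.cast_ofNat]
  intro a ha
  rw [mem_Icc] at ha
  rw [← hkm, neg_one_pow_sub_mul_div (by omega) (hk.not_dvd_mul_of_lt (by omega) (by omega)
    (by omega) (by omega)), show 2 * l - 1 + 1 = 2 * l by omega, pow_mul]
  simp

theorem sum_fract_add_fract_eq (hk : k.Prime) (hkm : k = 2 * m + 1) {h : ℕ} (h₀ : 0 < h)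
    (hh : h ≤ m) :
    ∑ l ∈ Icc 1 m, (Int.fract (2 * (h : ℝ) * l / k) + Int.fract ((h : ℝ) * (2 * (l : ℝ) - 1) / k))
      = m := by
  have hrefl : ∀ l ∈ Icc 1 m, Int.fract ((h : ℝ) * (2 * ((m + 1 - l : ℕ) : ℝ) - 1) / k)
      = 1 - Int.fract (2 * (h : ℝ) * l / k) := by
    intro l hl
    rw [mem_Icc] at hl
    have hk0 : (k : ℝ) ≠ 0 := Nat.cast_ne_zero.mpr hk.ne_zero
    have hnz : Int.fract (2 * (h : ℝ) * l / k) ≠ 0 := by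
      have hmod : 2 * h * l % k ≠ 0 := fun h0 ↦ hk.not_dvd_mul_of_lt (a := 2 * h) (b := l)
        (by omega) (by omega) (by omega) (by omega) (Nat.dvd_of_mod_eq_zero h0)
      rw [show 2 * (h : ℝ) * l = ((2 * h * l : ℕ) : ℝ) by push_cast; ring,
        Int.fract_div_natCast_eq_div_natCast_mod]
      exact div_ne_zero (Nat.cast_ne_zero.mpr hmod) hk0
    have hlin : (h : ℝ) * (2 * ((m + 1 - l : ℕ) : ℝ) - 1) / k
        = ((h : ℤ) : ℝ) + -(2 * (h : ℝ) * l / k) := by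
      field_simp
      rw [Nat.cast_sub (by omega), hkm]
      push_cast
      ring
    rw [hlin, Int.fract_intCast_add, Int.fract_neg hnz]
  calc _ = ∑ l ∈ Icc 1 m, (Int.fract (2 * (h : ℝ) * l / k)
        + Int.fract ((h : ℝ) * (2 * ((m + 1 - l : ℕ) : ℝ) - 1) / k)) := by
        rw [sum_add_distrib, sum_add_distrib,
          sum_Icc_one_reflect (fun l : ℕ ↦ Int.fract ((h : ℝ) * (2 * (l : ℝ) - 1) / k))]
    _ = m := by
        rw [sum_congr rfl fun l hl ↦ by rw [hrefl l hl]]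
        simp

end OddPrime

theorem stmt_4 (k : ℕ) (hk : k.Prime) (hodd : Odd k) :
    (Ssum k : ℝ) = -((k : ℝ) - 1) ^ 2 +
      4 * ∑ l ∈ Finset.Icc 1 ((k - 1) / 2), ∑ h ∈ Finset.Icc 1 ((k - 1) / 2),
        (Int.fract (2 * (h : ℝ) * l / k) +
          Int.fract ((h : ℝ) * (2 * (l : ℝ) - 1) / k - 1 / 2)) := by
  obtain ⟨m, hkm⟩ := hodd
  have hsum : ∑ l ∈ Icc 1 m, ∑ h ∈ Icc 1 m,
      (Int.fract (2 * (h : ℝ) * l / k) + Int.fract ((h : ℝ) * (2 * (l : ℝ) - 1) / k - 1 / 2))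
        = ∑ l ∈ Icc 1 m, ∑ h ∈ Icc 1 m,
            (Int.fract (2 * (h : ℝ) * l / k) + Int.fract ((h : ℝ) * (2 * (l : ℝ) - 1) / k))
          + (∑ l ∈ Icc 1 m, ∑ h ∈ Icc 1 m, ((-1 : ℤ) ^ (2 * h * (2 * l - 1) / k) : ℝ)) / 2 := by
    rw [sum_div, ← sum_add_distrib]
    refine sum_congr rfl fun l hl ↦ ?_
    rw [sum_div, ← sum_add_distrib]
    refine sum_congr rfl fun h _ ↦ ?_
    rw [fract_mul_two_mul_sub_one_div_sub_half h l k (mem_Icc.mp hl).1, add_assoc]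
  rw [show (k - 1) / 2 = m by omega, hsum, sum_comm,
    sum_congr rfl fun h hh ↦ sum_fract_add_fract_eq hk hkm (mem_Icc.mp hh).1 (mem_Icc.mp hh).2,
    Ssum_eq_two_mul_sum hk hkm]
  simp only [sum_const, Nat.card_Icc, add_tsub_cancel_right, nsmul_eq_mul, hkm]
  push_cast
  ring
end

section
/- If k is a prime with k ≡ 3 (mod 4) and h is an integer with 1 ≤ h ≤ (k-1)/2, then f((k+1)/4, h) = 2·{h/2} + 1/2, where f(l,h) := {2hl/k} + {h(2l-1)/k - 1/2} and {x} denotes the fractional part of x. -/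
/-- `f(l,h) := {2hl/k} + {h(2l-1)/k - 1/2}`, where `{x}` is the fractional part. -/
noncomputable def f (k : ℕ) (l h : ℤ) : ℝ :=
  Int.fract (2 * (h : ℝ) * l / k) + Int.fract ((h : ℝ) * (2 * (l : ℝ) - 1) / k - 1 / 2)

theorem stmt_6 (k : ℕ) (hk : k.Prime) (hk4 : k % 4 = 3) (h : ℤ)
    (hh₁ : 1 ≤ h) (hh₂ : h ≤ ((k : ℤ) - 1) / 2) :
    f k (((k : ℤ) + 1) / 4) h = 2 * Int.fract ((h : ℝ) / 2) + 1 / 2 := by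
  have hk0 : (0:ℝ) < (k:ℝ) := by exact_mod_cast hk.pos
  have hK : ((k:ℤ)) % 4 = 3 := by omega
  obtain ⟨c, hc⟩ : (4:ℤ) ∣ (k:ℤ) + 1 := by omega
  have hl : (((((k : ℤ) + 1) / 4) : ℤ) : ℝ) = ((k:ℝ)+1)/4 := by
    rw [hc, Int.mul_ediv_cancel_left _ (by norm_num)]
    have h4 : ((k:ℝ)+1) = 4*(c:ℝ) := by exact_mod_cast hc
    rw [h4]; ring
  have hhk : (h:ℝ) < (k:ℝ) := by exact_mod_cast (by omega : h < (k:ℤ))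
  have hh1 : (1:ℝ) ≤ (h:ℝ) := by exact_mod_cast hh₁
  set ε : ℝ := (h:ℝ)/(2*(k:ℝ)) with hε
  have hε0 : 0 < ε := by rw [hε]; positivity
  have hε2 : ε < 1/2 := by rw [hε, div_lt_iff₀ (by positivity)]; linarith
  unfold f
  rw [hl]
  have e1 : 2 * (h:ℝ) * (((k:ℝ)+1)/4) / k = (h:ℝ)/2 + ε := by
    rw [hε]; field_simp; ring
  have e2 : (h:ℝ) * (2 * (((k:ℝ)+1)/4) - 1) / k - 1/2 = (h:ℝ)/2 - ε - 1/2 := by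
    rw [hε]; field_simp; ring
  rw [e1, e2]
  rcases Int.even_or_odd h with ⟨m, hm⟩ | ⟨m, hm⟩
  · have hm' : (h:ℝ)/2 = (m:ℝ) := by
      have : (h:ℝ) = (m:ℝ) + (m:ℝ) := by exact_mod_cast hm
      rw [this]; ring
    have f1 : Int.fract ((h:ℝ)/2 + ε) = ε := by
      rw [hm', Int.fract_intCast_add, Int.fract_eq_self.mpr ⟨le_of_lt hε0, by linarith⟩]
    have f2 : Int.fract ((h:ℝ)/2 - ε - 1/2) = 1/2 - ε := by
      have : (h:ℝ)/2 - ε - 1/2 = ((m-1:ℤ):ℝ) + (1/2 - ε) := by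
        rw [hm']; push_cast; ring
      rw [this, Int.fract_intCast_add, Int.fract_eq_self.mpr ⟨by linarith, by linarith⟩]
    have f3 : Int.fract ((h:ℝ)/2) = 0 := by rw [hm', Int.fract_intCast]
    rw [f1, f2, f3]; ring
  · have hm' : (h:ℝ)/2 = (m:ℝ) + 1/2 := by
      have : (h:ℝ) = 2*(m:ℝ) + 1 := by exact_mod_cast hm
      rw [this]; ring
    have f1 : Int.fract ((h:ℝ)/2 + ε) = 1/2 + ε := by
      have : (h:ℝ)/2 + ε = (m:ℝ) + (1/2 + ε) := by rw [hm']; ring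
      rw [this, Int.fract_intCast_add, Int.fract_eq_self.mpr ⟨by linarith, by linarith⟩]
    have f2 : Int.fract ((h:ℝ)/2 - ε - 1/2) = 1 - ε := by
      have : (h:ℝ)/2 - ε - 1/2 = ((m-1:ℤ):ℝ) + (1 - ε) := by
        rw [hm']; push_cast; ring
      rw [this, Int.fract_intCast_add, Int.fract_eq_self.mpr ⟨by linarith, by linarith⟩]
    have f3 : Int.fract ((h:ℝ)/2) = 1/2 := by
      rw [hm', add_comm, Int.fract_add_intCast, Int.fract_eq_self.mpr ⟨by norm_num, by norm_num⟩]
    rw [f1, f2, f3]; ring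
end

section
/- If h and k are positive, coprime integers, then T(h,k) = (1 + (-1)^{k+h})·S(h,k) + (-1)^{k+h+1}. -/
/-!
Both sums are sums over `0 ≤ j < k` resp. `0 ≤ j < 2k` with the `j = 0` term (equal to `-1`)
removed. Shifting `j` by `k` raises `⌊hj/k⌋` by exactly `h`, so the summand picks up the sign
`(-1)^(k+h)`; hence the sum over `[0, 2k)` is `1 + (-1)^(k+h)` times the sum over `[0, k)`.
-/

open Finset

theorem sum_Icc_one_sub_one_add_apply_zero {M : Type*} [AddCommMonoid M] (f : ℕ → M) {n : ℕ}
    (hn : 0 < n) : ∑ j ∈ Icc 1 (n - 1), f j + f 0 = ∑ j ∈ range n, f j := by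
  obtain ⟨m, rfl⟩ := Nat.exists_eq_add_of_lt hn
  rw [sum_range_eq_add_Ico f (by omega), add_comm]
  rfl

theorem neg_one_pow_add_left_floor_shift (h k m : ℕ) (hk : 0 < k) :
    (-1 : ℤ) ^ (k + m + 1 + h * (k + m) / k) = (-1) ^ (k + h) * (-1) ^ (m + 1 + h * m / k) := by
  rw [Nat.mul_add, mul_comm h k, Nat.mul_add_div hk, ← pow_add]
  congr 1
  ring

theorem stmt_12_general (h k : ℕ) (hk : 0 < k) :
    Tpair h k = (1 + (-1 : ℤ) ^ (k + h)) * Spair h k + (-1 : ℤ) ^ (k + h + 1) := by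
  set g : ℕ → ℤ := fun j ↦ (-1) ^ (j + 1 + h * j / k)
  have hT : Tpair h k + g 0 = ∑ j ∈ range (2 * k), g j :=
    sum_Icc_one_sub_one_add_apply_zero g (by omega)
  have hS : Spair h k + g 0 = ∑ j ∈ range k, g j := sum_Icc_one_sub_one_add_apply_zero g hk
  have hg0 : g 0 = -1 := by simp [g]
  have hdouble : ∑ j ∈ range (2 * k), g j = (1 + (-1) ^ (k + h)) * ∑ j ∈ range k, g j := by
    rw [two_mul, sum_range_add, add_mul, one_mul, mul_sum]
    simp only [g, neg_one_pow_add_left_floor_shift h k _ hk]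
  rw [pow_succ]
  linear_combination hT - (1 + (-1 : ℤ) ^ (k + h)) * hS + hdouble + (-1 : ℤ) ^ (k + h) * hg0

theorem stmt_12 (h k : ℕ) (hh : 0 < h) (hk : 0 < k) (hcop : Nat.Coprime h k) :
    Tpair h k = (1 + (-1 : ℤ) ^ (k + h)) * Spair h k + (-1 : ℤ) ^ (k + h + 1) :=
  stmt_12_general h k hk
end

section
/- If h and k are positive, coprime integers of opposite parity (i.e., h + k is odd), then T(h,k) = 1. -/
lemma neg_one_pow_add_neg_one_pow_of_odd {R : Type*} [Ring R] {a b : ℕ} (hab : Odd (a + b)) :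
    (-1 : R) ^ a + (-1 : R) ^ b = 0 := by
  rcases Nat.even_or_odd a with ha | ha
  · have hb : Odd b := by rw [Nat.odd_add'] at hab; exact hab.mpr ha
    rw [ha.neg_one_pow, hb.neg_one_pow, add_neg_cancel]
  · have hb : Even b := Nat.odd_add.mp hab |>.mp ha
    rw [ha.neg_one_pow, hb.neg_one_pow, neg_add_cancel]

lemma Nat.div_add_div_add_one_of_dvd_add {a b k : ℕ} (hk : 0 < k) (hdvd : k ∣ a + b)
    (ha : ¬ k ∣ a) : a / k + b / k + 1 = (a + b) / k := by
  have ha_pos : 0 < a % k := Nat.pos_of_ne_zero fun h => ha (Nat.dvd_of_mod_eq_zero h)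
  have hsum_dvd : k ∣ a % k + b % k := by
    rw [Nat.dvd_iff_mod_eq_zero, ← Nat.add_mod]; exact Nat.mod_eq_zero_of_dvd hdvd
  have hsum_lt : a % k + b % k < 2 * k := by
    have := Nat.mod_lt a hk; have := Nat.mod_lt b hk; omega
  have hk_le : k ≤ a % k + b % k := Nat.le_of_dvd (by omega) hsum_dvd
  rw [Nat.add_div hk, if_pos hk_le]

lemma Nat.div_add_div_reflect_add_one {h k j : ℕ} (hcop : Nat.Coprime h k) (hj₀ : 0 < j)
    (hj : j < 2 * k) (hjk : j ≠ k) : h * j / k + h * (2 * k - j) / k + 1 = 2 * h := by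
  have hk : 0 < k := by omega
  have hndvd : ¬ k ∣ h * j := by
    intro hdvd
    obtain ⟨c, rfl⟩ := hcop.symm.dvd_of_dvd_mul_left hdvd
    rcases c with _ | _ | c
    · omega
    · simp at hjk
    · nlinarith
  have hsum : h * j + h * (2 * k - j) = 2 * h * k := by
    rw [← Nat.mul_add, Nat.add_sub_cancel' hj.le]; ring
  rw [Nat.div_add_div_add_one_of_dvd_add hk (hsum ▸ dvd_mul_left k _) hndvd, hsum,
    Nat.mul_div_cancel _ hk]

lemma Finset.sum_Icc_eq_middle_of_reflect {M : Type*} [AddCommMonoid M] {k : ℕ} (hk : 0 < k)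
    (f : ℕ → M) (hf : ∀ j ∈ Finset.Icc 1 (2 * k - 1), j ≠ k → f j + f (2 * k - j) = 0) :
    ∑ j ∈ Finset.Icc 1 (2 * k - 1), f j = f k := by
  have hmem : k ∈ Finset.Icc 1 (2 * k - 1) := Finset.mem_Icc.mpr ⟨hk, by omega⟩
  have hrest : ∑ j ∈ (Finset.Icc 1 (2 * k - 1)).erase k, f j = 0 := by
    refine Finset.sum_involution (fun j _ => 2 * k - j) (fun j hj => ?_) (fun j hj _ => ?_)
      (fun j hj => ?_) (fun j hj => ?_) <;>
      simp only [Finset.mem_erase, Finset.mem_Icc] at hj ⊢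
    · exact hf j (Finset.mem_Icc.mpr hj.2) hj.1
    all_goals omega
  rw [← Finset.add_sum_erase _ _ hmem, hrest, add_zero]

theorem stmt_13_general (h k : ℕ) (hk : 0 < k) (hcop : Nat.Coprime h k)
    (hpar : Odd (h + k)) : Tpair h k = 1 := by
  unfold Tpair
  rw [Finset.sum_Icc_eq_middle_of_reflect hk]
  · rw [Nat.mul_div_cancel h hk]
    obtain ⟨m, hm⟩ := hpar
    exact Even.neg_one_pow ⟨m + 1, by omega⟩
  · intro j hj hjk
    rw [Finset.mem_Icc] at hj
    have hfloor := Nat.div_add_div_reflect_add_one hcop (by omega) (by omega) hjk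
    exact neg_one_pow_add_neg_one_pow_of_odd ⟨k + h, by omega⟩

theorem stmt_13 (h k : ℕ) (hh : 0 < h) (hk : 0 < k) (hcop : Nat.Coprime h k)
    (hpar : Odd (h + k)) : Tpair h k = 1 :=
  stmt_13_general h k hk hcop hpar
end

section
/- Let h and k be coprime integers with k > 0 and h > 0, and let q be a positive integer. Then S(qh, qk) equals S(h,k) if h + k is odd and q is odd; equals 1 if h + k is odd and q is even; and equals -(q-1) if both h and k are odd. -/
/-!
Write `s(j) = (-1)^(j+1+⌊hj/k⌋)`, so that `S(h,k) = ∑_{j=0}^{k-1} s(j) + 1` (the `j = 0` term is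
`-1`). The summand of `S(qh,qk)` is the same function `s`, now summed over `0 ≤ j < qk`, and
`s(j + k) = (-1)^(h+k) s(j)`; hence `S(qh,qk) - 1` is the geometric sum `∑_{i<q} (-1)^((h+k)i)`
times `S(h,k) - 1`. When `h + k` is odd this sum is `1` or `0` according to the parity of `q`.
When `h` and `k` are both odd the factor is `q`, and `S(h,k) = 0` because `j ↦ k - j` pairs
summands of opposite sign: `⌊hj/k⌋ + ⌊h(k-j)/k⌋ = h - 1` as `k ∤ hj`.
-/

open Finset

theorem Finset.sum_range_mul_eq_geom_sum_mul {R : Type*} [CommSemiring R] {f : ℕ → R} {c : R}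
    {k : ℕ} (hf : ∀ j, f (j + k) = c * f j) (q : ℕ) :
    ∑ j ∈ range (q * k), f j = (∑ i ∈ range q, c ^ i) * ∑ j ∈ range k, f j := by
  have shift : ∀ n j, f (n * k + j) = c ^ n * f j := by
    intro n j
    induction n with
    | zero => simp
    | succ n ih => rw [add_mul, one_mul, add_right_comm, hf, ih, pow_succ, mul_comm _ c, mul_assoc]
  induction q with
  | zero => simp
  | succ q ih =>
    rw [add_mul, one_mul, sum_range_add, ih, sum_range_succ, add_mul, mul_sum _ _ (c ^ q)]
    simp only [shift]

theorem Nat.div_add_div_add_one_of_add_eq_mul_s14 {a b h k : ℕ} (hk : 0 < k) (hab : a + b = h * k)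
    (ha : ¬ k ∣ a) : a / k + b / k + 1 = h := by
  have hdvd : k ∣ a + b := hab ▸ dvd_mul_left k h
  have := Nat.add_div_eq_of_le_mod_add_mod (Nat.le_mod_add_mod_of_dvd_add_of_not_dvd hdvd ha) hk
  rw [hab, Nat.mul_div_cancel _ hk] at this
  omega

namespace Spair

def term (h k j : ℕ) : ℤ := (-1) ^ (j + 1 + h * j / k)

theorem eq_sum_term (h k : ℕ) : Spair h k = ∑ j ∈ Icc 1 (k - 1), term h k j := rfl

theorem eq_sum_range_term_add_one (h : ℕ) {k : ℕ} (hk : 0 < k) :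
    Spair h k = ∑ j ∈ range k, term h k j + 1 := by
  have hrange : range k = insert 0 (Icc 1 (k - 1)) := by
    ext j
    simp only [mem_range, mem_insert, mem_Icc]
    omega
  rw [eq_sum_term, hrange, sum_insert (by simp)]
  simp [term]

theorem term_mul_mul (h k : ℕ) {q : ℕ} (hq : 0 < q) : term (q * h) (q * k) = term h k := by
  funext j
  rw [term, term, mul_assoc, Nat.mul_div_mul_left _ _ hq]

theorem term_add_period (h : ℕ) {k : ℕ} (hk : 0 < k) (j : ℕ) :
    term h k (j + k) = (-1) ^ (h + k) * term h k j := by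
  rw [term, term, mul_add, Nat.add_mul_div_right _ _ hk, ← pow_add]
  congr 1
  ring

theorem term_sub_of_odd {h k : ℕ} (hh : Odd h) (hk : Odd k) (hcop : Nat.Coprime h k) {j : ℕ}
    (hj0 : 0 < j) (hjk : j < k) : term h k (k - j) = - term h k j := by
  have hndvd : ¬ k ∣ h * j := fun hdvd =>
    (Nat.not_dvd_of_pos_of_lt hj0 hjk) (hcop.symm.dvd_of_dvd_mul_left hdvd)
  have hfloor : h * j / k + h * (k - j) / k + 1 = h :=
    Nat.div_add_div_add_one_of_add_eq_mul_s14 (by omega)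
      (by rw [← mul_add, Nat.add_sub_cancel' hjk.le]) hndvd
  have hodd : Odd ((j + 1 + h * j / k) + (k - j + 1 + h * (k - j) / k)) := by
    have : (j + 1 + h * j / k) + (k - j + 1 + h * (k - j) / k) = (h + k) + 1 := by omega
    rw [this]
    exact (hh.add_odd hk).add_one
  rw [term, term, eq_neg_iff_add_eq_zero]
  have hprod : (-1 : ℤ) ^ _ = -1 := hodd.neg_one_pow
  rw [pow_add] at hprod
  rcases neg_one_pow_eq_or ℤ (j + 1 + h * j / k) with hs | hs <;> rw [hs] at hprod ⊢ <;> linarith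

theorem eq_zero_of_odd {h k : ℕ} (hh : Odd h) (hk : Odd k) (hcop : Nat.Coprime h k) :
    Spair h k = 0 := by
  rw [eq_sum_term]
  refine sum_involution (fun j _ => k - j) (fun j hj => ?_) (fun j hj _ => ?_)
    (fun j hj => ?_) (fun j hj => ?_) <;> rw [mem_Icc] at hj
  · rw [term_sub_of_odd hh hk hcop (by omega) (by omega), add_neg_cancel]
  · obtain ⟨m, rfl⟩ := hk
    omega
  · rw [mem_Icc]
    omega
  · omega

theorem mul_mul (h : ℕ) {k q : ℕ} (hk : 0 < k) (hq : 0 < q) :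
    Spair (q * h) (q * k) = (∑ i ∈ range q, ((-1) ^ (h + k)) ^ i) * (Spair h k - 1) + 1 := by
  rw [eq_sum_range_term_add_one _ (Nat.mul_pos hq hk), term_mul_mul h k hq,
    sum_range_mul_eq_geom_sum_mul (term_add_period h hk),
    eq_sum_range_term_add_one h hk, add_sub_cancel_right]

end Spair

theorem stmt_14_general (h k q : ℕ) (hk : 0 < k) (hq : 0 < q)
    (hcop : Nat.Coprime h k) :
    (Odd (h + k) → Odd q → Spair (q * h) (q * k) = Spair h k) ∧
    (Odd (h + k) → Even q → Spair (q * h) (q * k) = 1) ∧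
    (Odd h → Odd k → Spair (q * h) (q * k) = -((q : ℤ) - 1)) := by
  refine ⟨fun hhk hq' => ?_, fun hhk hq' => ?_, fun hh hk' => ?_⟩
  · rw [Spair.mul_mul h hk hq, hhk.neg_one_pow, neg_one_geom_sum,
      if_neg (Nat.not_even_iff_odd.mpr hq')]
    ring
  · rw [Spair.mul_mul h hk hq, hhk.neg_one_pow, neg_one_geom_sum, if_pos hq']
    ring
  · rw [Spair.mul_mul h hk hq, (hh.add_odd hk').neg_one_pow, Spair.eq_zero_of_odd hh hk' hcop]
    simp only [one_pow, sum_const, card_range, nsmul_eq_mul, mul_one]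
    ring

theorem stmt_14 (h k q : ℕ) (hh : 0 < h) (hk : 0 < k) (hq : 0 < q)
    (hcop : Nat.Coprime h k) :
    (Odd (h + k) → Odd q → Spair (q * h) (q * k) = Spair h k) ∧
    (Odd (h + k) → Even q → Spair (q * h) (q * k) = 1) ∧
    (Odd h → Odd k → Spair (q * h) (q * k) = -((q : ℤ) - 1)) :=
  stmt_14_general h k q hk hq hcop
end

section
/- For every even positive integer k, T(k) = 2k - 1 - ∑_{1≤h≤2k-1, h≡2 (mod 4)} 2·gcd(h,k). -/
open Finset

lemma neg_one_pow_eq_of_mod_two_eq {R : Type*} [Ring R] {m n : ℕ} (h : m % 2 = n % 2) :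
    (-1 : R) ^ m = (-1) ^ n := by
  rw [neg_one_pow_eq_pow_mod_two, h, ← neg_one_pow_eq_pow_mod_two]

lemma Nat.div_add_div_add_ite_of_dvd_add {a b k : ℕ} (hk : 0 < k) (h : k ∣ a + b) :
    a / k + b / k + (if k ∣ a then 0 else 1) = (a + b) / k := by
  split_ifs with ha
  · exact (Nat.add_div_of_dvd_right ha).symm
  · exact (Nat.add_div_eq_of_le_mod_add_mod
      (Nat.le_mod_add_mod_of_dvd_add_of_not_dvd h ha) hk).symm

lemma Finset.Icc_one_two_mul_sub_one (k : ℕ) : Icc 1 (2 * k - 1) = Ioo 0 (2 * k) := by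
  ext j; simp only [mem_Icc, mem_Ioo]; omega

lemma Finset.sum_filter_dvd_Ioo_mul {M : Type*} [AddCommMonoid M] (f : ℕ → M) {b : ℕ}
    (hb : 0 < b) (n : ℕ) :
    ∑ j ∈ (Ioo 0 (b * n)).filter (b ∣ ·), f j = ∑ c ∈ Ioo 0 n, f (b * c) := by
  refine Eq.trans ?_ (sum_map _ ⟨(b * ·), mul_right_injective₀ hb.ne'⟩ f)
  congr 1
  ext j
  simp only [mem_filter, mem_Ioo, mem_map, Function.Embedding.coeFn_mk]
  constructor
  · rintro ⟨⟨hj0, hjn⟩, c, rfl⟩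
    exact ⟨c, ⟨Nat.pos_of_mul_pos_left hj0, Nat.lt_of_mul_lt_mul_left hjn⟩, rfl⟩
  · rintro ⟨c, ⟨hc0, hcn⟩, rfl⟩
    exact ⟨⟨Nat.mul_pos hb hc0, Nat.mul_lt_mul_of_pos_left hcn hb⟩, dvd_mul_right b c⟩

lemma Finset.sum_Ioo_two_mul {M : Type*} [AddCommMonoid M] (f : ℕ → M) (n : ℕ) :
    ∑ j ∈ Ioo 0 (2 * n), f j = ∑ i ∈ range n, f (2 * i + 1) + ∑ i ∈ Ioo 0 n, f (2 * i) := by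
  rw [← sum_filter_not_add_sum_filter _ (fun j => Even j)]
  congr 1
  · refine sum_nbij' (· / 2) (2 * · + 1) ?_ ?_ ?_ ?_ fun j _ => congrArg f ?_ <;>
      simp only [mem_filter, mem_Ioo, mem_range, Nat.even_iff] at * <;> omega
  · refine sum_nbij' (· / 2) (2 * ·) ?_ ?_ ?_ ?_ fun j _ => congrArg f ?_ <;>
      simp only [mem_filter, mem_Ioo, Nat.even_iff] at * <;> omega

lemma sum_Ioo_neg_one_pow_mul_add_one (x : ℕ) {n : ℕ} (hn : 0 < n) :
    ∑ c ∈ Ioo 0 (2 * n), (-1 : ℤ) ^ (x * c + 1) = if Even x then 1 - 2 * (n : ℤ) else 1 := by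
  have hterm : ∀ c, (-1 : ℤ) ^ (x * c + 1) = -((-1) ^ x) ^ c := fun c => by
    rw [pow_succ, pow_mul]; ring
  simp_rw [hterm, sum_neg_distrib]
  rcases Nat.even_or_odd x with hx | hx
  · simp only [hx.neg_one_pow, if_pos hx, one_pow, sum_const, nsmul_one, Nat.card_Ioo,
      Nat.sub_zero]
    push_cast [show 1 ≤ 2 * n by omega]
    ring
  · have hrange := neg_one_geom_sum (R := ℤ) (n := 2 * n)
    rw [range_eq_Ico, Ico_eq_cons_Ioo (by omega), sum_cons, if_pos (even_two_mul n)] at hrange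
    rw [hx.neg_one_pow, if_neg (Nat.not_even_iff_odd.2 hx)]
    linarith [pow_zero (-1 : ℤ)]

lemma Tpair_eq_sum_Ioo (h k : ℕ) : Tpair h k = ∑ j ∈ Ioo 0 (2 * k), Tsign h k j := by
  rw [Tpair, Icc_one_two_mul_sub_one]
  rfl

lemma Tsign_two_mul_sub (h : ℕ) {k j : ℕ} (hk : 0 < k) (hj : j ≤ 2 * k) :
    Tsign h k (2 * k - j) = if k ∣ h * j then Tsign h k j else -Tsign h k j := by
  have hsum : h * j + h * (2 * k - j) = 2 * h * k := by
    rw [← mul_add, Nat.add_sub_cancel' hj]; ring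
  have hdiv := Nat.div_add_div_add_ite_of_dvd_add hk (hsum ▸ dvd_mul_left k (2 * h))
  rw [hsum, Nat.mul_div_cancel _ hk] at hdiv
  unfold Tsign
  split_ifs at hdiv ⊢
  · exact neg_one_pow_eq_of_mod_two_eq (by omega)
  · rw [neg_one_pow_eq_of_mod_two_eq (n := j + 1 + h * j / k + 1) (by omega), pow_succ,
      mul_neg_one]

lemma Tpair_eq_sum_filter_dvd (h : ℕ) {k : ℕ} (hk : 0 < k) :
    Tpair h k = ∑ j ∈ (Ioo 0 (2 * k)).filter (k ∣ h * ·), Tsign h k j := by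
  have hreflect :
      ∑ j ∈ Ioo 0 (2 * k), Tsign h k (2 * k - j) = ∑ j ∈ Ioo 0 (2 * k), Tsign h k j := by
    refine sum_nbij' (2 * k - ·) (2 * k - ·) ?_ ?_ ?_ ?_ fun _ _ => rfl <;>
      simp only [mem_Ioo] <;> omega
  apply mul_left_cancel₀ (two_ne_zero (α := ℤ))
  calc 2 * Tpair h k = ∑ j ∈ Ioo 0 (2 * k), (Tsign h k j + Tsign h k (2 * k - j)) := by
        rw [sum_add_distrib, hreflect, Tpair_eq_sum_Ioo]; ring
    _ = ∑ j ∈ Ioo 0 (2 * k), if k ∣ h * j then 2 * Tsign h k j else 0 :=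
        sum_congr rfl fun j hj => by
          rw [Tsign_two_mul_sub h hk (mem_Ioo.1 hj).2.le]; split_ifs <;> ring
    _ = 2 * ∑ j ∈ (Ioo 0 (2 * k)).filter (k ∣ h * ·), Tsign h k j := by
        rw [sum_filter, mul_sum]; simp_rw [mul_ite, mul_zero]

theorem Tpair_eq (h : ℕ) {k : ℕ} (hk : 0 < k) :
    Tpair h k = if Even (h / h.gcd k + k / h.gcd k) then 1 - 2 * (h.gcd k : ℤ) else 1 := by
  set g := h.gcd k
  set a := h / g
  set b := k / g
  have hg : 0 < g := Nat.gcd_pos_of_pos_right h hk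
  have hh : h = g * a := (Nat.mul_div_cancel' (Nat.gcd_dvd_left h k)).symm
  have hk' : k = g * b := (Nat.mul_div_cancel' (Nat.gcd_dvd_right h k)).symm
  have hab : a.Coprime b := Nat.coprime_div_gcd_div_gcd hg
  have hb : 0 < b := Nat.pos_of_ne_zero (by rintro hb; rw [hb, mul_zero] at hk'; omega)
  have hdvd : ∀ j, k ∣ h * j ↔ b ∣ j := fun j => by
    rw [hh, hk', mul_assoc, Nat.mul_dvd_mul_iff_left hg, hab.symm.dvd_mul_left]
  have hterm : ∀ c, Tsign h k (b * c) = (-1) ^ ((a + b) * c + 1) := fun c => by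
    rw [Tsign, show h * (b * c) = k * (a * c) by rw [hh, hk']; ring,
      Nat.mul_div_cancel_left _ hk]
    ring_nf
  rw [Tpair_eq_sum_filter_dvd h hk, filter_congr fun j _ => hdvd j,
    show 2 * k = b * (2 * g) by rw [hk']; ring, sum_filter_dvd_Ioo_mul _ hb]
  simp_rw [hterm]
  exact sum_Ioo_neg_one_pow_mul_add_one _ hg

lemma Tpair_of_odd_add {h k : ℕ} (hk : 0 < k) (hhk : Odd (h + k)) : Tpair h k = 1 := by
  rw [Tpair_eq h hk, if_neg]
  intro heven
  have hsum : (h / h.gcd k + k / h.gcd k) * h.gcd k = h + k := by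
    rw [add_mul, Nat.div_mul_cancel (Nat.gcd_dvd_left h k),
      Nat.div_mul_cancel (Nat.gcd_dvd_right h k)]
  exact Nat.not_even_iff_odd.2 hhk (hsum ▸ heven.mul_right _)

lemma Tpair_of_odd_of_odd {h k : ℕ} (hh : Odd h) (hk : Odd k) :
    Tpair h k = 1 - 2 * (h.gcd k : ℤ) := by
  have ha : Odd (h / h.gcd k) :=
    Nat.Odd.of_mul_left (by rwa [Nat.div_mul_cancel (Nat.gcd_dvd_left h k)])
  have hb : Odd (k / h.gcd k) :=
    Nat.Odd.of_mul_left (by rwa [Nat.div_mul_cancel (Nat.gcd_dvd_right h k)])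
  rw [Tpair_eq h hk.pos, if_pos (ha.add_odd hb)]

lemma Tpair_two_mul_two_mul (h : ℕ) {k : ℕ} (hk : 0 < k) :
    Tpair (2 * h) (2 * k) = 2 * Tpair h k - 1 := by
  rw [Tpair_eq _ (by omega), Tpair_eq h hk, Nat.gcd_mul_left,
    Nat.mul_div_mul_left _ _ two_pos, Nat.mul_div_mul_left _ _ two_pos]
  push_cast
  split_ifs <;> ring

def oddGcdSum (k : ℕ) : ℤ := ∑ i ∈ range k, (Nat.gcd (2 * i + 1) k : ℤ)

lemma oddGcdSum_two_mul (n : ℕ) : oddGcdSum (2 * n) = 2 * oddGcdSum n := by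
  have hcop : ∀ i, Nat.gcd (2 * i + 1) (2 * n) = Nat.gcd (2 * i + 1) n := fun i =>
    Nat.Coprime.gcd_mul_left_cancel_right n (Nat.coprime_two_left.2 (odd_two_mul_add_one i))
  have hperiod : ∀ i, Nat.gcd (2 * (n + i) + 1) n = Nat.gcd (2 * i + 1) n := fun i => by
    rw [show 2 * (n + i) + 1 = 2 * i + 1 + n * 2 by ring, Nat.gcd_add_mul_left_left]
  simp_rw [oddGcdSum, hcop]
  rw [two_mul n, sum_range_add]
  simp_rw [hperiod]
  ring

lemma Tsum_eq_sum_Ioo (k : ℕ) : Tsum k = ∑ h ∈ Ioo 0 (2 * k), Tpair h k := by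
  rw [Tsum, Icc_one_two_mul_sub_one]

lemma Tsum_two_mul {n : ℕ} (hn : 0 < n) : Tsum (2 * n) = 2 * Tsum n + 1 := by
  rw [Tsum_eq_sum_Ioo, Tsum_eq_sum_Ioo, sum_Ioo_two_mul,
    sum_congr rfl fun i _ => Tpair_of_odd_add (by omega) ⟨i + n, by ring⟩,
    sum_congr rfl fun i _ => Tpair_two_mul_two_mul i hn]
  simp only [sum_const, card_range, nsmul_one, sum_sub_distrib, ← mul_sum, Nat.card_Ioo,
    Nat.sub_zero]
  push_cast [show 1 ≤ 2 * n by omega]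
  ring

lemma Tsum_of_odd {k : ℕ} (hk : Odd k) : Tsum k = 2 * k - 1 - 2 * oddGcdSum k := by
  rw [Tsum_eq_sum_Ioo, sum_Ioo_two_mul,
    sum_congr rfl fun i _ => Tpair_of_odd_of_odd (odd_two_mul_add_one i) hk,
    sum_congr rfl fun i _ => Tpair_of_odd_add hk.pos ((even_two_mul i).add_odd hk)]
  simp only [oddGcdSum, sum_sub_distrib, sum_const, card_range, nsmul_one, ← mul_sum,
    Nat.card_Ioo, Nat.sub_zero]
  push_cast [hk.pos]
  ring

theorem Tsum_eq {k : ℕ} (hk : 0 < k) : Tsum k = 2 * k - 1 - 2 * oddGcdSum k := by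
  induction k using Nat.strong_induction_on with
  | _ k ih =>
    rcases Nat.even_or_odd' k with ⟨n, rfl | rfl⟩
    · rw [Tsum_two_mul (by omega), ih n (by omega) (by omega), oddGcdSum_two_mul]
      push_cast
      ring
    · exact Tsum_of_odd (odd_two_mul_add_one n)

lemma sum_filter_mod_four_eq_two (n : ℕ) :
    ∑ h ∈ (Icc 1 (2 * (2 * n) - 1)).filter (fun h => h % 4 = 2), 2 * (Nat.gcd h (2 * n) : ℤ) =
      4 * oddGcdSum n := by
  rw [oddGcdSum, mul_sum]
  refine sum_nbij' (· / 4) (4 * · + 2) ?_ ?_ ?_ ?_ fun h hh => ?_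
  all_goals simp only [mem_filter, mem_Icc, mem_range] at *
  any_goals omega
  obtain ⟨i, rfl⟩ : ∃ i, h = 2 * (2 * i + 1) := ⟨h / 4, by omega⟩
  rw [show 2 * (2 * i + 1) / 4 = i by omega, Nat.gcd_mul_left]
  push_cast
  ring

theorem stmt_17 (k : ℕ) (hk : 0 < k) (heven : Even k) :
    Tsum k = 2 * (k : ℤ) - 1 -
      ∑ h ∈ (Finset.Icc 1 (2 * k - 1)).filter (fun h => h % 4 = 2),
        2 * (Nat.gcd h k : ℤ) := by
  obtain ⟨n, rfl⟩ := heven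
  rw [← two_mul] at hk ⊢
  rw [Tsum_eq hk, sum_filter_mod_four_eq_two, oddGcdSum_two_mul]
  ring
end

section
/- If k is an even positive integer and h is an odd positive integer, then T(h,k) = 1. -/
/-!
The summand `f j = (-1) ^ (j + 1 + ⌊h j / k⌋)` is antiperiodic with period `k`: shifting `j` by `k`
shifts the exponent by `k + h`, which is odd. Hence `f` sums to `0` over `0 ≤ j < 2k`, and
`T(h,k)` is that sum with the term `f 0 = -1` removed.
-/

open Finset

theorem Function.Antiperiodic.sum_range_two_mul {M : Type*} [AddCommGroup M] {f : ℕ → M} {c : ℕ}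
    (hf : Function.Antiperiodic f c) : ∑ j ∈ range (2 * c), f j = 0 := by
  simp only [two_mul, sum_range_add, add_comm c, hf _, sum_neg_distrib, add_neg_cancel]

theorem antiperiodic_neg_one_pow_add_div {h k : ℕ} (hk : 0 < k) (hkh : Odd (k + h)) :
    Function.Antiperiodic (fun j : ℕ ↦ (-1 : ℤ) ^ (j + 1 + h * j / k)) k := by
  intro j
  have hdiv : h * (j + k) / k = h * j / k + h := by
    rw [Nat.mul_add, Nat.add_mul_div_right _ _ hk]
  simp only [hdiv]
  rw [show j + k + 1 + (h * j / k + h) = j + 1 + h * j / k + (k + h) by ring, pow_add,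
    hkh.neg_one_pow, mul_neg_one]

theorem Tpair_eq_sum_range_sub (h k : ℕ) (hk : 0 < k) :
    Tpair h k = ∑ j ∈ range (2 * k), (-1 : ℤ) ^ (j + 1 + h * j / k) - (-1) := by
  have hIcc : Icc 1 (2 * k - 1) = Ico 1 (2 * k) := by
    ext x; simp only [mem_Icc, mem_Ico]; omega
  rw [Tpair, hIcc, sum_Ico_eq_sub _ (by omega)]
  simp

theorem stmt_18_general (h k : ℕ) (hk : 0 < k) (hko : Even k) (hho : Odd h) :
    Tpair h k = 1 := by
  rw [Tpair_eq_sum_range_sub h k hk,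
    (antiperiodic_neg_one_pow_add_div hk (hko.add_odd hho)).sum_range_two_mul]
  norm_num

theorem stmt_18 (h k : ℕ) (hh : 0 < h) (hk : 0 < k) (hko : Even k) (hho : Odd h) :
    Tpair h k = 1 :=
  stmt_18_general h k hk hko hho
end
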